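/- arXiv:1510.08997 — 4 statements merged into one kernel-verified Lean document; each statement's English description precedes it below -/
import Mathlib

section
/- Let n ≥ 3, α ∈ (2/n, 1], R > 0, T > 0 and let c be a constant with c − 1 > (2/α)·1/(n − 2/α). Define Ψ(x,t) = C_α ((T − ct)/(|x|² + R²))^{1/α}, where C_α > 0 satisfies C_α^α = 2 n^{α−1}(n − 2/α). Then for all x ∈ ℝⁿ and 0 ≤ t < T/c one has the identity ∂_t Ψ − Σ_i ∂_{x_i}( n^{α−1} Ψ^{−α} ∂_{x_i} Ψ ) = (2 Ψ^{1−α})/(α n^{1−α} (|x|²+R²)²) · [ (2/α) R² − (c−1)(n − 2/α)(|x|²+R²) ], and in particular ∂_t Ψ − Σ_i ∂_{x_i}( n^{α−1} Ψ^{−α} ∂_{x_i} Ψ ) ≤ −( (c−1)(n − 2/α) − 2/α ) · (2/α) · (Ψ^{1−α}/n^{1−α}) · 1/(|x|²+R²) < 0, so Ψ is a strict bounded subsolution of the fast diffusion equation. -/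
/-- Partial derivative in the `i`-th coordinate direction. -/
noncomputable def pd {n : ℕ} (i : Fin n) (f : EuclideanSpace ℝ (Fin n) → ℝ)
    (x : EuclideanSpace ℝ (Fin n)) : ℝ :=
  fderiv ℝ f x (EuclideanSpace.single i (1 : ℝ))

private lemma pd_eq {n : ℕ} (i : Fin n) {f : EuclideanSpace ℝ (Fin n) → ℝ}
    {f' : EuclideanSpace ℝ (Fin n) →L[ℝ] ℝ} {x : EuclideanSpace ℝ (Fin n)}
    (hf : HasFDerivAt f f' x) :
    pd i f x = f' (EuclideanSpace.single i (1 : ℝ)) := by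
  unfold pd; rw [hf.fderiv]

set_option maxHeartbeats 1000000 in
/-- Barrier identity for the bounded subsolution
`Ψ(x,t) = C_α ((T−ct)/(|x|²+R²))^{1/α}` with `n ≥ 3`, `α ∈ (2/n,1]`, and
`c − 1 > (2/α)/(n − 2/α)`: the exact value of
`∂_tΨ − ∑_i ∂_{x_i}(n^{α−1}Ψ^{−α}∂_{x_i}Ψ)` is given by the displayed formula,
and it is bounded above by a strictly negative quantity on `0 ≤ t < T/c`. -/
theorem barrier_subsolution_identity (n : ℕ) (hn : 3 ≤ n) (α R T c : ℝ)
    (hα : 2 / (n : ℝ) < α ∧ α ≤ 1) (hR : 0 < R) (hT : 0 < T)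
    (hc : c - 1 > (2 / α) * (1 / ((n : ℝ) - 2 / α)))
    (Cα : ℝ) (hCpos : 0 < Cα)
    (hCα : Cα ^ α = 2 * (n : ℝ) ^ (α - 1) * ((n : ℝ) - 2 / α))
    (Ψ : EuclideanSpace ℝ (Fin n) → ℝ → ℝ)
    (hΨ : ∀ x s, Ψ x s = Cα * ((T - c * s) / (‖x‖ ^ 2 + R ^ 2)) ^ (1 / α)) :
    ∀ (x : EuclideanSpace ℝ (Fin n)) (t : ℝ), 0 ≤ t → t < T / c →
      (deriv (Ψ x) t -
          ∑ i, pd i (fun y =>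
            (n : ℝ) ^ (α - 1) * (Ψ y t) ^ (-α) * pd i (fun z => Ψ z t) y) x =
        (2 * (Ψ x t) ^ (1 - α)) / (α * (n : ℝ) ^ (1 - α) * (‖x‖ ^ 2 + R ^ 2) ^ 2) *
          ((2 / α) * R ^ 2 - (c - 1) * ((n : ℝ) - 2 / α) * (‖x‖ ^ 2 + R ^ 2))) ∧
      (deriv (Ψ x) t -
          ∑ i, pd i (fun y =>
            (n : ℝ) ^ (α - 1) * (Ψ y t) ^ (-α) * pd i (fun z => Ψ z t) y) x ≤
        -(((c - 1) * ((n : ℝ) - 2 / α) - 2 / α) * (2 / α) *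
          ((Ψ x t) ^ (1 - α) / (n : ℝ) ^ (1 - α)) * (1 / (‖x‖ ^ 2 + R ^ 2)))) ∧
      (-(((c - 1) * ((n : ℝ) - 2 / α) - 2 / α) * (2 / α) *
          ((Ψ x t) ^ (1 - α) / (n : ℝ) ^ (1 - α)) * (1 / (‖x‖ ^ 2 + R ^ 2))) < 0) := by
  obtain ⟨hα1, hα2⟩ := hα
  have hn3 : (3 : ℝ) ≤ (n : ℝ) := by exact_mod_cast hn
  have hnpos : (0 : ℝ) < (n : ℝ) := by linarith
  have hα0 : (0 : ℝ) < α := lt_trans (by positivity) hα1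
  have hm : (0 : ℝ) < (n : ℝ) - 2 / α := by
    have h2 : 2 / α < (n : ℝ) := by
      rw [div_lt_iff₀ hα0]
      rw [div_lt_iff₀ hnpos] at hα1
      nlinarith
    linarith
  have hc1 : (1 : ℝ) < c := by
    have h0 : (0 : ℝ) < (2 / α) * (1 / ((n : ℝ) - 2 / α)) := by positivity
    linarith
  intro x t ht0 htT
  have hcpos : (0 : ℝ) < c := by linarith
  have hs : 0 < T - c * t := by
    have h1 : t * c < T := (lt_div_iff₀ hcpos).mp htT
    nlinarith
  have hq : ∀ y : EuclideanSpace ℝ (Fin n), (0 : ℝ) < ‖y‖ ^ 2 + R ^ 2 := fun y => by positivity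
  have hqx : (0 : ℝ) < ‖x‖ ^ 2 + R ^ 2 := hq x
  set K : ℝ := Cα * (T - c * t) ^ (1 / α) with hK
  have hKpos : 0 < K := by
    have : (0 : ℝ) < (T - c * t) ^ (1 / α) := Real.rpow_pos_of_pos hs _
    positivity
  -- Ψ(·,t) in product form
  have hΨt : ∀ y : EuclideanSpace ℝ (Fin n),
      Ψ y t = K * (‖y‖ ^ 2 + R ^ 2) ^ (-(1 / α)) := by
    intro y
    rw [hΨ, Real.div_rpow hs.le (hq y).le, Real.rpow_neg (hq y).le, div_eq_mul_inv, hK, mul_assoc]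
  -- derivative of the weight function
  have hQd : ∀ y : EuclideanSpace ℝ (Fin n),
      HasFDerivAt (fun z : EuclideanSpace ℝ (Fin n) => ‖z‖ ^ 2 + R ^ 2) (2 • (innerSL ℝ y)) y :=
    fun y => (hasStrictFDerivAt_norm_sq y).hasFDerivAt.add_const (R ^ 2)
  -- spatial derivative of Ψ(·,t)
  have hΨxd : ∀ y : EuclideanSpace ℝ (Fin n), HasFDerivAt (fun z => Ψ z t)
      (K • ((-(1 / α) * (‖y‖ ^ 2 + R ^ 2) ^ (-(1 / α) - 1)) • (2 • (innerSL ℝ y)))) y := by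
    intro y
    have h1 : HasFDerivAt (fun z : EuclideanSpace ℝ (Fin n) => (‖z‖ ^ 2 + R ^ 2) ^ (-(1 / α)))
        ((-(1 / α) * (‖y‖ ^ 2 + R ^ 2) ^ (-(1 / α) - 1)) • (2 • (innerSL ℝ y))) y :=
      (hQd y).rpow_const (Or.inl (hq y).ne')
    have h2 := h1.const_mul K
    have hfun : (fun z => Ψ z t)
        = fun z : EuclideanSpace ℝ (Fin n) => K * (‖z‖ ^ 2 + R ^ 2) ^ (-(1 / α)) :=
      funext fun z => hΨt z
    rw [hfun]
    exact h2
  have hpdΨ : ∀ (i : Fin n) (y : EuclideanSpace ℝ (Fin n)),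
      pd i (fun z => Ψ z t) y
        = K * (-(1 / α) * (‖y‖ ^ 2 + R ^ 2) ^ (-(1 / α) - 1)) * (2 * y i) := by
    intro i y
    rw [pd_eq i (hΨxd y)]
    simp [EuclideanSpace.inner_single_right, real_inner_comm]
    ring
  -- flux in closed form
  have hflux : ∀ (i : Fin n) (y : EuclideanSpace ℝ (Fin n)),
      (n : ℝ) ^ (α - 1) * (Ψ y t) ^ (-α) * pd i (fun z => Ψ z t) y
        = ((n : ℝ) ^ (α - 1) * K ^ (1 - α) * (-(2 / α)))
            * (y i * (‖y‖ ^ 2 + R ^ 2) ^ (-(1 / α))) := by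
    intro i y
    have hqy := hq y
    rw [hpdΨ i y, hΨt y]
    have e1 : (K * (‖y‖ ^ 2 + R ^ 2) ^ (-(1 / α))) ^ (-α)
        = K ^ (-α) * (‖y‖ ^ 2 + R ^ 2) := by
      rw [Real.mul_rpow hKpos.le (Real.rpow_nonneg hqy.le _), ← Real.rpow_mul hqy.le,
        show (-(1 / α)) * (-α) = 1 by field_simp, Real.rpow_one]
    rw [e1]
    have e2 : (‖y‖ ^ 2 + R ^ 2) * (‖y‖ ^ 2 + R ^ 2) ^ (-(1 / α) - 1)
        = (‖y‖ ^ 2 + R ^ 2) ^ (-(1 / α)) := by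
      have h := Real.rpow_add hqy 1 (-(1 / α) - 1)
      rw [Real.rpow_one] at h
      rw [← h]
      congr 1
      ring
    have e3 : K ^ (-α) * K = K ^ (1 - α) := by
      have h := Real.rpow_add hKpos (-α) 1
      rw [Real.rpow_one] at h
      rw [← h]
      congr 1
      ring
    calc (n : ℝ) ^ (α - 1) * (K ^ (-α) * (‖y‖ ^ 2 + R ^ 2))
          * (K * (-(1 / α) * (‖y‖ ^ 2 + R ^ 2) ^ (-(1 / α) - 1)) * (2 * y i))
        = ((n : ℝ) ^ (α - 1) * (K ^ (-α) * K) * (-(2 / α)))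
            * (y i * ((‖y‖ ^ 2 + R ^ 2) * (‖y‖ ^ 2 + R ^ 2) ^ (-(1 / α) - 1))) := by
          ring
      _ = _ := by rw [e2, e3]
  -- derivative of the flux, coordinate i
  have hpdF : ∀ i : Fin n,
      pd i (fun y => (n : ℝ) ^ (α - 1) * (Ψ y t) ^ (-α) * pd i (fun z => Ψ z t) y) x
        = ((n : ℝ) ^ (α - 1) * K ^ (1 - α) * (-(2 / α)))
            * (x i * (-(1 / α) * (‖x‖ ^ 2 + R ^ 2) ^ (-(1 / α) - 1) * (2 * x i))
                + (‖x‖ ^ 2 + R ^ 2) ^ (-(1 / α))) := by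
    intro i
    have hfun : (fun y => (n : ℝ) ^ (α - 1) * (Ψ y t) ^ (-α) * pd i (fun z => Ψ z t) y)
        = fun y : EuclideanSpace ℝ (Fin n) =>
            ((n : ℝ) ^ (α - 1) * K ^ (1 - α) * (-(2 / α)))
              * (y i * (‖y‖ ^ 2 + R ^ 2) ^ (-(1 / α))) := funext fun y => hflux i y
    have hg : HasFDerivAt (fun z : EuclideanSpace ℝ (Fin n) => (‖z‖ ^ 2 + R ^ 2) ^ (-(1 / α)))
        ((-(1 / α) * (‖x‖ ^ 2 + R ^ 2) ^ (-(1 / α) - 1)) • (2 • (innerSL ℝ x))) x :=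
      (hQd x).rpow_const (Or.inl hqx.ne')
    have hp : HasFDerivAt (fun y : EuclideanSpace ℝ (Fin n) => y i)
        (EuclideanSpace.proj i : EuclideanSpace ℝ (Fin n) →L[ℝ] ℝ) x :=
      (EuclideanSpace.proj (𝕜 := ℝ) i (ι := Fin n)).hasFDerivAt.congr_of_eventuallyEq
        (Filter.Eventually.of_forall fun y => rfl)
    have hprod := (hp.mul hg).const_mul ((n : ℝ) ^ (α - 1) * K ^ (1 - α) * (-(2 / α)))
    have hF : HasFDerivAt
        (fun y => (n : ℝ) ^ (α - 1) * (Ψ y t) ^ (-α) * pd i (fun z => Ψ z t) y)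
        (((n : ℝ) ^ (α - 1) * K ^ (1 - α) * (-(2 / α))) •
          (x i • ((-(1 / α) * (‖x‖ ^ 2 + R ^ 2) ^ (-(1 / α) - 1)) • (2 • (innerSL ℝ x)))
            + (‖x‖ ^ 2 + R ^ 2) ^ (-(1 / α)) •
                (EuclideanSpace.proj i : EuclideanSpace ℝ (Fin n) →L[ℝ] ℝ))) x := by
      rw [hfun]
      exact hprod
    rw [pd_eq i hF]
    simp [EuclideanSpace.inner_single_right, real_inner_comm, EuclideanSpace.single_apply]
    ring
  -- sum over i
  have hnorm : ∑ i, (x i) ^ 2 = ‖x‖ ^ 2 := by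
    rw [PiLp.norm_sq_eq_of_L2]; simp [sq_abs]
  have hsum : ∑ i, pd i (fun y =>
        (n : ℝ) ^ (α - 1) * (Ψ y t) ^ (-α) * pd i (fun z => Ψ z t) y) x
      = ((n : ℝ) ^ (α - 1) * K ^ (1 - α) * (-(2 / α)))
          * ((-(2 / α)) * (‖x‖ ^ 2 + R ^ 2) ^ (-(1 / α) - 1) * ‖x‖ ^ 2
              + (n : ℝ) * (‖x‖ ^ 2 + R ^ 2) ^ (-(1 / α))) := by
    rw [Finset.sum_congr rfl fun i _ => hpdF i, ← Finset.mul_sum]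
    congr 1
    rw [Finset.sum_add_distrib, Finset.sum_const, Finset.card_univ, Fintype.card_fin]
    have h1 : ∀ i : Fin n,
        x i * (-(1 / α) * (‖x‖ ^ 2 + R ^ 2) ^ (-(1 / α) - 1) * (2 * x i))
          = (x i) ^ 2 * ((-(2 / α)) * (‖x‖ ^ 2 + R ^ 2) ^ (-(1 / α) - 1)) := by
      intro i; ring
    rw [Finset.sum_congr rfl fun i _ => h1 i, ← Finset.sum_mul, hnorm]
    simp [nsmul_eq_mul]
    ring
  -- time derivative
  have hderivt : deriv (Ψ x) t
      = Cα * (-c / (‖x‖ ^ 2 + R ^ 2) * (1 / α)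
          * ((T - c * t) / (‖x‖ ^ 2 + R ^ 2)) ^ (1 / α - 1)) := by
    have h0 : HasDerivAt (fun u : ℝ => T - c * u) (-c) t := by
      simpa using ((hasDerivAt_id t).const_mul c).const_sub T
    have h1 : HasDerivAt (fun u : ℝ => (T - c * u) / (‖x‖ ^ 2 + R ^ 2))
        (-c / (‖x‖ ^ 2 + R ^ 2)) t := h0.div_const _
    have h2 := h1.rpow_const (p := 1 / α) (Or.inl (ne_of_gt (div_pos hs hqx)))
    have h3 := h2.const_mul Cα
    have hfx : Ψ x = fun u => Cα * ((T - c * u) / (‖x‖ ^ 2 + R ^ 2)) ^ (1 / α) :=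
      funext fun u => hΨ x u
    rw [hfx, h3.deriv]
  -- rpow bookkeeping identities
  have hA1 : ((T - c * t) / (‖x‖ ^ 2 + R ^ 2)) ^ (1 / α - 1)
      = ((T - c * t) ^ (1 / α) * (T - c * t)⁻¹)
          * ((‖x‖ ^ 2 + R ^ 2) ^ (-(1 / α) - 1) * (‖x‖ ^ 2 + R ^ 2) ^ 2) := by
    rw [Real.div_rpow hs.le hqx.le, div_eq_mul_inv]
    have hS : (T - c * t) ^ (1 / α - 1) = (T - c * t) ^ (1 / α) * (T - c * t)⁻¹ := by
      rw [show 1 / α - 1 = 1 / α + (-1) by ring, Real.rpow_add hs, Real.rpow_neg_one]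
    have hQ : (((‖x‖ ^ 2 + R ^ 2) ^ (1 / α - 1))⁻¹ : ℝ)
        = (‖x‖ ^ 2 + R ^ 2) ^ (-(1 / α) - 1) * (‖x‖ ^ 2 + R ^ 2) ^ 2 := by
      rw [← Real.rpow_neg hqx.le, ← Real.rpow_natCast (‖x‖ ^ 2 + R ^ 2) 2,
        ← Real.rpow_add hqx]
      congr 1
      push_cast
      ring
    rw [hS, hQ]
  have hA2 : K ^ (1 - α) = Cα ^ (1 - α) * ((T - c * t) ^ (1 / α) * (T - c * t)⁻¹) := by
    rw [hK, Real.mul_rpow hCpos.le (Real.rpow_nonneg hs.le _), ← Real.rpow_mul hs.le,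
      show (1 / α) * (1 - α) = 1 / α + (-1) by field_simp; ring, Real.rpow_add hs,
      Real.rpow_neg_one]
  have hA3 : (Ψ x t) ^ (1 - α)
      = Cα ^ (1 - α) * ((T - c * t) ^ (1 / α) * (T - c * t)⁻¹)
          * ((‖x‖ ^ 2 + R ^ 2) ^ (-(1 / α) - 1) * (‖x‖ ^ 2 + R ^ 2) ^ 2) := by
    rw [hΨt x, Real.mul_rpow hKpos.le (Real.rpow_nonneg hqx.le _), hA2, ← Real.rpow_mul hqx.le]
    congr 1
    rw [← Real.rpow_natCast (‖x‖ ^ 2 + R ^ 2) 2, ← Real.rpow_add hqx]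
    congr 1
    push_cast
    field_simp
    ring
  have hA4 : (‖x‖ ^ 2 + R ^ 2) ^ (-(1 / α))
      = (‖x‖ ^ 2 + R ^ 2) ^ (-(1 / α) - 1) * (‖x‖ ^ 2 + R ^ 2) := by
    have h := Real.rpow_add hqx (-(1 / α) - 1) 1
    rw [Real.rpow_one] at h
    rw [← h]
    congr 1
    ring
  have hA6 : (n : ℝ) ^ (1 - α) = ((n : ℝ) ^ (α - 1))⁻¹ := by
    rw [show (1 - α) = -(α - 1) by ring, Real.rpow_neg hnpos.le]
  have hCα' : Cα = Cα ^ (1 - α) * (2 * (n : ℝ) ^ (α - 1) * ((n : ℝ) - 2 / α)) := by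
    have h := Real.rpow_add hCpos (1 - α) α
    rw [show (1 - α) + α = 1 by ring, Real.rpow_one] at h
    rw [← hCα]
    exact h
  -- positivity facts
  have hΨpos : 0 < Ψ x t := by
    rw [hΨ]
    exact mul_pos hCpos (Real.rpow_pos_of_pos (div_pos hs hqx) _)
  have hP1 : 0 < (Ψ x t) ^ (1 - α) := Real.rpow_pos_of_pos hΨpos _
  have hN1 : 0 < (n : ℝ) ^ (1 - α) := Real.rpow_pos_of_pos hnpos _
  have hν : (0 : ℝ) < (n : ℝ) ^ (α - 1) := Real.rpow_pos_of_pos hnpos _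
  have hG : (0 : ℝ) < Cα ^ (1 - α) := Real.rpow_pos_of_pos hCpos _
  have hW : (0 : ℝ) < (T - c * t) ^ (1 / α) := Real.rpow_pos_of_pos hs _
  have hU : (0 : ℝ) < (‖x‖ ^ 2 + R ^ 2) ^ (-(1 / α) - 1) := Real.rpow_pos_of_pos hqx _
  -- the key identity
  have key : deriv (Ψ x) t -
        ∑ i, pd i (fun y =>
          (n : ℝ) ^ (α - 1) * (Ψ y t) ^ (-α) * pd i (fun z => Ψ z t) y) x =
      (2 * (Ψ x t) ^ (1 - α)) / (α * (n : ℝ) ^ (1 - α) * (‖x‖ ^ 2 + R ^ 2) ^ 2) *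
        ((2 / α) * R ^ 2 - (c - 1) * ((n : ℝ) - 2 / α) * (‖x‖ ^ 2 + R ^ 2)) := by
    rw [hderivt, hsum, hCα', hA1, hA2, hA3, hA4, hA6]
    field_simp [hα0.ne', hs.ne', hqx.ne', hν.ne']
    ring
  refine ⟨key, ?_, ?_⟩
  · -- the inequality
    have hident2 : -(((c - 1) * ((n : ℝ) - 2 / α) - 2 / α) * (2 / α) *
          ((Ψ x t) ^ (1 - α) / (n : ℝ) ^ (1 - α)) * (1 / (‖x‖ ^ 2 + R ^ 2)))
        = (2 * (Ψ x t) ^ (1 - α)) / (α * (n : ℝ) ^ (1 - α) * (‖x‖ ^ 2 + R ^ 2) ^ 2) *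
            ((2 / α) * R ^ 2 - (c - 1) * ((n : ℝ) - 2 / α) * (‖x‖ ^ 2 + R ^ 2))
          + (2 * (Ψ x t) ^ (1 - α)) / (α * (n : ℝ) ^ (1 - α) * (‖x‖ ^ 2 + R ^ 2) ^ 2) *
              ((2 / α) * ‖x‖ ^ 2) := by
      field_simp
      ring
    have hextra : 0 ≤ (2 * (Ψ x t) ^ (1 - α)) / (α * (n : ℝ) ^ (1 - α) * (‖x‖ ^ 2 + R ^ 2) ^ 2) *
        ((2 / α) * ‖x‖ ^ 2) := by
      apply mul_nonneg
      · exact div_nonneg (by linarith) (by positivity)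
      · positivity
    rw [key, hident2]
    linarith
  · -- strict negativity
    have hfac : 0 < (c - 1) * ((n : ℝ) - 2 / α) - 2 / α := by
      have h1 := mul_lt_mul_of_pos_right hc hm
      have h2 : (2 / α) * (1 / ((n : ℝ) - 2 / α)) * ((n : ℝ) - 2 / α) = 2 / α := by
        rw [mul_assoc, one_div, inv_mul_cancel₀ hm.ne', mul_one]
      rw [h2] at h1
      linarith
    have hpos : 0 < ((c - 1) * ((n : ℝ) - 2 / α) - 2 / α) * (2 / α) *
        ((Ψ x t) ^ (1 - α) / (n : ℝ) ^ (1 - α)) * (1 / (‖x‖ ^ 2 + R ^ 2)) := by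
      apply mul_pos
      apply mul_pos
      apply mul_pos hfac (by positivity)
      · exact div_pos hP1 hN1
      · positivity
    exact neg_lt_zero.mpr hpos
end

section
/- Let n ≥ 3, α ∈ (2/n, 1], R > 0, T > 0, and c a constant with c − 1 > (2/α)·1/(n − 2/α). Let Ψ(x,t) = C_α ((T − ct)/(|x|² + R²))^{1/α} with C_α^α = 2 n^{α−1}(n − 2/α), and define A_i, B_i as in the second order expansion: A_i = −(n/Ψ)^α ∂_{x_i}Ψ, A_{i+n} = −A_i, B_i = B_{i+n} = (n/Ψ)^α ∂_{x_i}((n/Ψ)^α ∂_{x_i}Ψ) − (α/(2Ψ))((n/Ψ)^α ∂_{x_i}Ψ)² for 1 ≤ i ≤ n. Then there exists a constant c₆ > 0 depending only on c, n, α such that for every ε > 0 and every i = 1,…,2n, the function u_i^ε = (1/(2n))(Ψ + ε A_i + ε² B_i) satisfies (1/(4n)) Ψ ≤ u_i^ε ≤ (3/(4n)) Ψ at every point (x,t) with ε (|x|²+R²)^{1/2} < c₆ (T − ct) and 0 ≤ t < T/c. -/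
open Real

section PartialDerivatives

variable {n : ℕ} (i : Fin n) (x : EuclideanSpace ℝ (Fin n))

theorem pd_const_mul (C : ℝ) (f : EuclideanSpace ℝ (Fin n) → ℝ) :
    pd i (fun z => C * f z) x = C * pd i f x := by
  change fderiv ℝ (C • f) x _ = _
  rw [fderiv_const_smul_field]
  rfl

theorem pd_eq_of_hasFDerivAt {f : EuclideanSpace ℝ (Fin n) → ℝ}
    {f' : EuclideanSpace ℝ (Fin n) →L[ℝ] ℝ} (hf : HasFDerivAt f f' x) :
    pd i f x = f' (EuclideanSpace.single i 1) := by
  rw [pd, hf.fderiv]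

variable {a : ℝ}

theorem hasFDerivAt_rpow_norm_sq_add (ha : 0 < a) (p : ℝ) :
    HasFDerivAt (fun z : EuclideanSpace ℝ (Fin n) => (‖z‖ ^ 2 + a) ^ p)
      ((p * (‖x‖ ^ 2 + a) ^ (p - 1)) • (2 : ℝ) • innerSL ℝ x) x := by
  refine (((hasFDerivAt_id x).norm_sq.add_const a).rpow_const
    (by left; positivity)).congr_fderiv ?_
  ext; simp

theorem pd_rpow_norm_sq_add (ha : 0 < a) (p : ℝ) :
    pd i (fun z => (‖z‖ ^ 2 + a) ^ p) x = 2 * p * x i * (‖x‖ ^ 2 + a) ^ (p - 1) := by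
  rw [pd_eq_of_hasFDerivAt i x (hasFDerivAt_rpow_norm_sq_add x ha p)]
  simp only [smul_apply, coe_innerSL_apply,
    EuclideanSpace.inner_single_right, ringHom_apply, one_mul, smul_eq_mul]
  ring

theorem pd_coord_mul_rpow_norm_sq_add (ha : 0 < a) (p : ℝ) :
    pd i (fun z => z i * (‖z‖ ^ 2 + a) ^ p) x
      = (‖x‖ ^ 2 + a) ^ p + 2 * p * x i ^ 2 * (‖x‖ ^ 2 + a) ^ (p - 1) := by
  have hcoord : HasFDerivAt (fun z : EuclideanSpace ℝ (Fin n) => z i)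
      (EuclideanSpace.proj (𝕜 := ℝ) i) x := (EuclideanSpace.proj (𝕜 := ℝ) i).hasFDerivAt
  rw [pd_eq_of_hasFDerivAt i x (hcoord.fun_mul (hasFDerivAt_rpow_norm_sq_add x ha p))]
  simp only [add_apply, smul_apply, coe_innerSL_apply,
    EuclideanSpace.inner_single_right, ringHom_apply, one_mul, smul_eq_mul, PiLp.proj_apply,
    PiLp.single_eq_same, mul_one]
  ring

theorem pd_const_mul_rpow_norm_sq_add (ha : 0 < a) (K p : ℝ) :
    pd i (fun z => K * (‖z‖ ^ 2 + a) ^ p) x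
      = 2 * p * x i * (K * (‖x‖ ^ 2 + a) ^ p) / (‖x‖ ^ 2 + a) := by
  have hF : ‖x‖ ^ 2 + a ≠ 0 := by positivity
  rw [pd_const_mul, pd_rpow_norm_sq_add i x ha, rpow_sub_one hF]
  ring

end PartialDerivatives

section ExpansionCoefficients

variable {n : ℕ} (i : Fin n) (x : EuclideanSpace ℝ (Fin n)) {a α κ K τ : ℝ}
  {ψ w : EuclideanSpace ℝ (Fin n) → ℝ}

theorem weight_mul_pd_barrier (ha : 0 < a)
    (hψ : ∀ z, ψ z = K * (‖z‖ ^ 2 + a) ^ (-(1 / α)))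
    (hw : ∀ z, w z = κ * (‖z‖ ^ 2 + a) / τ) :
    w x * pd i ψ x = -(2 / α) * κ * x i * ψ x / τ := by
  have hF : ‖x‖ ^ 2 + a ≠ 0 := by positivity
  rw [show ψ = _ from funext hψ, pd_const_mul_rpow_norm_sq_add i x ha, hw]
  field_simp

theorem second_order_coeff_barrier (ha : 0 < a)
    (hψ : ∀ z, ψ z = K * (‖z‖ ^ 2 + a) ^ (-(1 / α)))
    (hw : ∀ z, w z = κ * (‖z‖ ^ 2 + a) / τ) :
    w x * pd i (fun y => w y * pd i ψ y) x - α / (2 * ψ x) * (w x * pd i ψ x) ^ 2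
      = -(2 / α) * κ ^ 2 * ψ x * (‖x‖ ^ 2 + a + (1 - 2 / α) * x i ^ 2) / τ ^ 2 := by
  have hF : ‖x‖ ^ 2 + a ≠ 0 := by positivity
  have hflux : (fun y => w y * pd i ψ y)
      = fun y => (-(2 / α) * κ * K / τ) * (y i * (‖y‖ ^ 2 + a) ^ (-(1 / α))) := by
    funext y
    rw [weight_mul_pd_barrier i y ha hψ hw, hψ]
    ring
  rw [hflux, pd_const_mul, pd_coord_mul_rpow_norm_sq_add i x ha,
    weight_mul_pd_barrier i x ha hψ hw, hw, hψ, rpow_sub_one hF]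
  field_simp
  ring

end ExpansionCoefficients

theorem div_mul_rpow_one_div_rpow {m C q α : ℝ} (hm : 0 ≤ m) (hC : 0 ≤ C) (hq : 0 ≤ q)
    (hα : α ≠ 0) : (m / (C * q ^ (1 / α))) ^ α = m ^ α / (C ^ α * q) := by
  rw [div_rpow hm (by positivity), mul_rpow hC (by positivity), ← rpow_mul hq,
    one_div_mul_cancel hα, rpow_one]

theorem mul_div_rpow_eq_mul_rpow_neg {C τ F p : ℝ} (hτ : 0 ≤ τ) (hF : 0 ≤ F) :
    C * (τ / F) ^ p = C * τ ^ p * F ^ (-p) := by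
  rw [div_rpow hτ hF, rpow_neg hF, div_eq_mul_inv, mul_assoc]

theorem two_mul_rpow_sub_one_mul_sub_pos {N α : ℝ} (hN : 0 < N) (hα : 2 / N < α) :
    0 < 2 * N ^ (α - 1) * (N - 2 / α) := by
  have hα0 : 0 < α := (div_pos two_pos hN).trans hα
  have hαN : 2 / α < N := by
    rw [div_lt_iff₀ hα0, mul_comm]
    exact (div_lt_iff₀ hN).mp hα
  exact mul_pos (mul_pos two_pos (rpow_pos_of_pos hN _)) (sub_pos.mpr hαN)

theorem sub_mul_pos_of_lt_div {T c t : ℝ} (hT : 0 < T) (ht : 0 ≤ t) (htT : t < T / c) :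
    0 < T - c * t := by
  have hc : 0 < c := (div_pos_iff_of_pos_left hT).mp (ht.trans_lt htT)
  rw [lt_div_iff₀ hc] at htT
  linarith

theorem sq_apply_le_norm_sq {n : ℕ} (x : EuclideanSpace ℝ (Fin n)) (i : Fin n) :
    x i ^ 2 ≤ ‖x‖ ^ 2 := by
  simpa only [Real.norm_eq_abs, sq_abs] using
    pow_le_pow_left₀ (norm_nonneg _) (PiLp.norm_apply_le x i) 2

theorem abs_scaled_corrections_le_half {β s u : ℝ} (hβ : 0 ≤ β) (hu : |u| ≤ s)
    (hs : 4 * (β + 2) * s ≤ 1) :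
    |β * u| + |β * (s ^ 2 + (1 - β) * u ^ 2)| ≤ 1 / 2 := by
  have hs0 : 0 ≤ s := (abs_nonneg u).trans hu
  have husq : u ^ 2 ≤ s ^ 2 := sq_le_sq' (abs_le.mp hu).1 (abs_le.mp hu).2
  have hfirst : |β * u| ≤ (β + 2) * s := by
    rw [abs_mul, abs_of_nonneg hβ]
    nlinarith [mul_le_mul_of_nonneg_left hu hβ]
  have hsecond : |β * (s ^ 2 + (1 - β) * u ^ 2)| ≤ ((β + 2) * s) ^ 2 := by
    have hbracket : |s ^ 2 + (1 - β) * u ^ 2| ≤ (β + 2) * s ^ 2 := by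
      rw [abs_le]
      constructor <;> nlinarith [sq_nonneg u]
    rw [abs_mul, abs_of_nonneg hβ]
    nlinarith [mul_le_mul_of_nonneg_left hbracket hβ]
  nlinarith [mul_nonneg (by positivity : (0 : ℝ) ≤ β + 2) hs0]

theorem abs_corrections_le_half {β κ τ ε ψ ξ F A B : ℝ} (hβ : 0 ≤ β) (hκ : 0 < κ)
    (hτ : 0 < τ) (hε : 0 ≤ ε) (hψ : 0 ≤ ψ) (hξ : ξ ^ 2 ≤ F)
    (hsmall : ε * √F ≤ τ / (4 * (β + 2) * κ))
    (hA : A = β * κ * ξ * ψ / τ)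
    (hB : B = -β * κ ^ 2 * ψ * (F + (1 - β) * ξ ^ 2) / τ ^ 2) :
    |ε * A| + |ε ^ 2 * B| ≤ ψ / 2 := by
  have hF : 0 ≤ F := (sq_nonneg ξ).trans hξ
  have hu : |κ * ε * ξ / τ| ≤ κ * ε * √F / τ := by
    rw [abs_div, abs_mul, abs_of_pos hτ, abs_of_nonneg (by positivity)]
    gcongr
    exact abs_le_sqrt hξ
  have hs : 4 * (β + 2) * (κ * ε * √F / τ) ≤ 1 := by
    rw [le_div_iff₀ (by positivity)] at hsmall
    rw [mul_div_assoc', div_le_one hτ]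
    linarith
  have hεA : ε * A = ψ * (β * (κ * ε * ξ / τ)) := by rw [hA]; ring
  have hεB : ε ^ 2 * B
      = -(ψ * (β * ((κ * ε * √F / τ) ^ 2 + (1 - β) * (κ * ε * ξ / τ) ^ 2))) := by
    rw [hB, div_pow, mul_pow, sq_sqrt hF]; ring
  rw [hεA, hεB, abs_neg, abs_mul, abs_mul ψ, abs_of_nonneg hψ, ← mul_add]
  linarith [mul_le_mul_of_nonneg_left (abs_scaled_corrections_le_half hβ hu hs) hψ]

theorem comparable_of_abs_le_half {N ψ E : ℝ} (hN : 0 ≤ N) (hE : |E| ≤ ψ / 2) :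
    1 / (4 * N) * ψ ≤ 1 / (2 * N) * (ψ + E) ∧ 1 / (2 * N) * (ψ + E) ≤ 3 / (4 * N) * ψ := by
  obtain ⟨hlo, hhi⟩ := abs_le.mp hE
  constructor
  · calc 1 / (4 * N) * ψ = 1 / (2 * N) * (ψ / 2) := by ring
      _ ≤ 1 / (2 * N) * (ψ + E) := by gcongr; linarith
  · calc 1 / (2 * N) * (ψ + E) ≤ 1 / (2 * N) * (3 / 2 * ψ) := by gcongr; linarith
      _ = 3 / (4 * N) * ψ := by ring

theorem expansion_comparable_to_barrier_general (n : ℕ) (hn : 3 ≤ n) (α c : ℝ)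
    (hα : 2 / (n : ℝ) < α ∧ α ≤ 1) :
    ∃ c₆ > (0 : ℝ), ∀ (R T Cα : ℝ), 0 < R → 0 < T → 0 < Cα →
      Cα ^ α = 2 * (n : ℝ) ^ (α - 1) * ((n : ℝ) - 2 / α) →
      ∀ Ψ : EuclideanSpace ℝ (Fin n) → ℝ → ℝ,
      (∀ x s, Ψ x s = Cα * ((T - c * s) / (‖x‖ ^ 2 + R ^ 2)) ^ (1 / α)) →
      ∀ A B : (Fin n ⊕ Fin n) → EuclideanSpace ℝ (Fin n) → ℝ → ℝ,
      (∀ (i : Fin n) x s,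
        A (Sum.inl i) x s = -(((n : ℝ) / Ψ x s) ^ α) * pd i (fun z => Ψ z s) x) →
      (∀ (i : Fin n) x s, A (Sum.inr i) x s = -A (Sum.inl i) x s) →
      (∀ (i : Fin n) x s,
        B (Sum.inl i) x s = ((n : ℝ) / Ψ x s) ^ α *
            pd i (fun y => ((n : ℝ) / Ψ y s) ^ α * pd i (fun z => Ψ z s) y) x -
          (α / (2 * Ψ x s)) *
            (((n : ℝ) / Ψ x s) ^ α * pd i (fun z => Ψ z s) x) ^ 2) →
      (∀ (i : Fin n) x s, B (Sum.inr i) x s = B (Sum.inl i) x s) →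
      ∀ ε : ℝ, 0 < ε →
      ∀ u : (Fin n ⊕ Fin n) → EuclideanSpace ℝ (Fin n) → ℝ → ℝ,
      (∀ i x s, u i x s = (1 / (2 * (n : ℝ))) *
        (Ψ x s + ε * A i x s + ε ^ 2 * B i x s)) →
      ∀ (x : EuclideanSpace ℝ (Fin n)) (t : ℝ), 0 ≤ t → t < T / c →
        ε * (‖x‖ ^ 2 + R ^ 2) ^ ((1 : ℝ) / 2) < c₆ * (T - c * t) →
        ∀ i, (1 / (4 * (n : ℝ))) * Ψ x t ≤ u i x t ∧
          u i x t ≤ (3 / (4 * (n : ℝ))) * Ψ x t := by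
  have hn0 : (0 : ℝ) < n := Nat.cast_pos.mpr (by omega)
  have hα0 : 0 < α := (div_pos two_pos hn0).trans hα.1
  set κ := (n : ℝ) ^ α / (2 * (n : ℝ) ^ (α - 1) * ((n : ℝ) - 2 / α)) with hκ
  have hκ0 : 0 < κ :=
    div_pos (rpow_pos_of_pos hn0 α) (two_mul_rpow_sub_one_mul_sub_pos hn0 hα.1)
  refine ⟨1 / (4 * (2 / α + 2) * κ), by positivity, ?_⟩
  intro R T Cα hR hT hCα hCαα Ψ hΨ A B hA hA' hB hB' ε hε u hu x t ht htT hregion i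
  have hτ : 0 < T - c * t := sub_mul_pos_of_lt_div hT ht htT
  have hR2 : 0 < R ^ 2 := by positivity
  have hbarrier : ∀ z, Ψ z t = Cα * (T - c * t) ^ (1 / α) * (‖z‖ ^ 2 + R ^ 2) ^ (-(1 / α)) :=
    fun z => (hΨ z t).trans (mul_div_rpow_eq_mul_rpow_neg hτ.le (by positivity))
  have hweight : ∀ z, ((n : ℝ) / Ψ z t) ^ α = κ * (‖z‖ ^ 2 + R ^ 2) / (T - c * t) := by
    intro z
    rw [hΨ z t, div_mul_rpow_one_div_rpow hn0.le hCα.le (by positivity) hα0.ne', hCαα, hκ]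
    field_simp
  have hsmall : ε * √(‖x‖ ^ 2 + R ^ 2) ≤ (T - c * t) / (4 * (2 / α + 2) * κ) := by
    simpa only [sqrt_eq_rpow, one_div_mul_eq_div] using hregion.le
  have hterms : ∀ j, |ε * A (Sum.inl j) x t| + |ε ^ 2 * B (Sum.inl j) x t| ≤ Ψ x t / 2 :=
    fun j => abs_corrections_le_half (β := 2 / α) (by positivity) hκ0 hτ hε.le
      (by rw [hΨ]; positivity) ((sq_apply_le_norm_sq x j).trans (le_add_of_nonneg_right hR2.le))
      hsmall
      (by rw [hA, neg_mul, weight_mul_pd_barrier j x hR2 hbarrier hweight]; ring)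
      (by rw [hB, second_order_coeff_barrier j x hR2 hbarrier hweight])
  have hE : |ε * A i x t + ε ^ 2 * B i x t| ≤ Ψ x t / 2 := by
    rcases i with j | j
    · exact (abs_add_le _ _).trans (hterms j)
    · rw [hA', hB', mul_neg]
      exact (abs_add_le _ _).trans (by rw [abs_neg]; exact hterms j)
  rw [hu, add_assoc]
  exact comparable_of_abs_le_half hn0.le hE

/-- Comparability of the second order expansion with the barrier: for the
barrier `Ψ(x,t) = C_α ((T−ct)/(|x|²+R²))^{1/α}` and its correction
coefficients `A_i, B_i`, the functions `u_i^ε = (1/(2n))(Ψ + εA_i + ε²B_i)`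
satisfy `(1/(4n))Ψ ≤ u_i^ε ≤ (3/(4n))Ψ` on the region
`ε(|x|²+R²)^{1/2} < c₆(T−ct)`, `0 ≤ t < T/c`, where `c₆ > 0` depends only
on `c, n, α`. -/
theorem expansion_comparable_to_barrier (n : ℕ) (hn : 3 ≤ n) (α c : ℝ)
    (hα : 2 / (n : ℝ) < α ∧ α ≤ 1)
    (hc : c - 1 > (2 / α) * (1 / ((n : ℝ) - 2 / α))) :
    ∃ c₆ > (0 : ℝ), ∀ (R T Cα : ℝ), 0 < R → 0 < T → 0 < Cα →
      Cα ^ α = 2 * (n : ℝ) ^ (α - 1) * ((n : ℝ) - 2 / α) →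
      ∀ Ψ : EuclideanSpace ℝ (Fin n) → ℝ → ℝ,
      (∀ x s, Ψ x s = Cα * ((T - c * s) / (‖x‖ ^ 2 + R ^ 2)) ^ (1 / α)) →
      ∀ A B : (Fin n ⊕ Fin n) → EuclideanSpace ℝ (Fin n) → ℝ → ℝ,
      (∀ (i : Fin n) x s,
        A (Sum.inl i) x s = -(((n : ℝ) / Ψ x s) ^ α) * pd i (fun z => Ψ z s) x) →
      (∀ (i : Fin n) x s, A (Sum.inr i) x s = -A (Sum.inl i) x s) →
      (∀ (i : Fin n) x s,
        B (Sum.inl i) x s = ((n : ℝ) / Ψ x s) ^ α *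
            pd i (fun y => ((n : ℝ) / Ψ y s) ^ α * pd i (fun z => Ψ z s) y) x -
          (α / (2 * Ψ x s)) *
            (((n : ℝ) / Ψ x s) ^ α * pd i (fun z => Ψ z s) x) ^ 2) →
      (∀ (i : Fin n) x s, B (Sum.inr i) x s = B (Sum.inl i) x s) →
      ∀ ε : ℝ, 0 < ε →
      ∀ u : (Fin n ⊕ Fin n) → EuclideanSpace ℝ (Fin n) → ℝ → ℝ,
      (∀ i x s, u i x s = (1 / (2 * (n : ℝ))) *
        (Ψ x s + ε * A i x s + ε ^ 2 * B i x s)) →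
      ∀ (x : EuclideanSpace ℝ (Fin n)) (t : ℝ), 0 ≤ t → t < T / c →
        ε * (‖x‖ ^ 2 + R ^ 2) ^ ((1 : ℝ) / 2) < c₆ * (T - c * t) →
        ∀ i, (1 / (4 * (n : ℝ))) * Ψ x t ≤ u i x t ∧
          u i x t ≤ (3 / (4 * (n : ℝ))) * Ψ x t :=
  expansion_comparable_to_barrier_general n hn α c hα
end

section
/- Let n ≥ 2, α = 2/n, R > 0, T > 0, and define Ψ(x,t) = (n^{α−1})^{1/α} ( T / ( (|x|² + R² e^{4nt/T}) (t/T + 1) ) )^{1/α}. Then for all x ∈ ℝⁿ and 0 < t < T one has the identity ∂_t Ψ − Σ_i ∂_{x_i}( n^{α−1} Ψ^{−α} ∂_{x_i} Ψ ) = −[ 2n ((T−t)/T) · R² e^{4nt/T}/(|x|² + R² e^{4nt/T}) + 1/(t/T + 1) ] · Ψ/(αT), and consequently ∂_t Ψ − Σ_i ∂_{x_i}( n^{α−1} Ψ^{−α} ∂_{x_i} Ψ ) < −Ψ/(2αT) < 0. -/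
open Real

section RadialCalculus

variable {n : ℕ} {f : ℝ → ℝ} {f' : ℝ} {x : EuclideanSpace ℝ (Fin n)}

theorem pd_comp_norm_sq (hf : HasDerivAt f f' (‖x‖ ^ 2)) (i : Fin n) :
    pd i (fun y => f (‖y‖ ^ 2)) x = 2 * f' * x i := by
  have h : HasFDerivAt (fun y => f (‖y‖ ^ 2)) _ x :=
    hf.comp_hasFDerivAt x (hasStrictFDerivAt_norm_sq x).hasFDerivAt
  rw [pd, h.fderiv]
  simp [EuclideanSpace.inner_single_right]
  ring

theorem pd_comp_norm_sq_mul_apply (hf : HasDerivAt f f' (‖x‖ ^ 2)) (i : Fin n) :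
    pd i (fun y => f (‖y‖ ^ 2) * y i) x = 2 * f' * x i ^ 2 + f (‖x‖ ^ 2) := by
  have h : HasFDerivAt (fun y => f (‖y‖ ^ 2) * y i) _ x :=
    (hf.comp_hasFDerivAt x (hasStrictFDerivAt_norm_sq x).hasFDerivAt).mul
      (EuclideanSpace.proj (𝕜 := ℝ) i).hasFDerivAt
  rw [pd, h.fderiv]
  simp [EuclideanSpace.inner_single_right]
  ring

theorem sum_pd_comp_norm_sq_mul_apply (hf : HasDerivAt f f' (‖x‖ ^ 2)) :
    ∑ i, pd i (fun y => f (‖y‖ ^ 2) * y i) x =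
      2 * f' * ‖x‖ ^ 2 + n * f (‖x‖ ^ 2) := by
  simp only [pd_comp_norm_sq_mul_apply hf, Finset.sum_add_distrib, ← Finset.mul_sum,
    ← EuclideanSpace.real_norm_sq_eq, Finset.sum_const, Finset.card_univ, Fintype.card_fin,
    nsmul_eq_mul]

end RadialCalculus

theorem mul_rpow_one_div_mul_rpow_neg {b v α : ℝ} (hb : 0 < b) (hv : 0 < v) (hα : α ≠ 0) :
    b * (b ^ (1 / α) * v ^ (1 / α)) ^ (-α) = v⁻¹ := by
  rw [← mul_rpow hb.le hv.le, ← rpow_mul (mul_pos hb hv).le,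
    show 1 / α * -α = -1 by field_simp, rpow_neg_one, mul_inv, ← mul_assoc,
    mul_inv_cancel₀ hb.ne', one_mul]

theorem HasDerivAt.div_mul_rpow_const {g h : ℝ → ℝ} {g' h' c p t : ℝ}
    (hg : HasDerivAt g g' t) (hh : HasDerivAt h h' t) (hc : c ≠ 0) (hg0 : g t ≠ 0)
    (hh0 : h t ≠ 0) :
    HasDerivAt (fun s => (c / (g s * h s)) ^ p)
      (-p * (c / (g t * h t)) ^ p * (g' / g t + h' / h t)) t := by
  have hv : c / (g t * h t) ≠ 0 := div_ne_zero hc (mul_ne_zero hg0 hh0)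
  refine (((hasDerivAt_const t c).div (hg.mul hh) (mul_ne_zero hg0 hh0)).rpow_const
    (p := p) (Or.inl hv)).congr_deriv ?_
  simp only [Pi.div_apply, Pi.mul_apply, rpow_sub_one hv]
  field_simp
  ring

noncomputable def barrier (n : ℕ) (α R T : ℝ) (x : EuclideanSpace ℝ (Fin n)) (s : ℝ) :
    ℝ :=
  ((n : ℝ) ^ (α - 1)) ^ (1 / α) *
    (T / ((‖x‖ ^ 2 + R ^ 2 * exp (4 * n * s / T)) * (s / T + 1))) ^ (1 / α)

section Barrier

variable {n : ℕ} {α R T t : ℝ}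

theorem barrier_eq_radial (hT : 0 < T) (ht : 0 < t / T + 1) (y : EuclideanSpace ℝ (Fin n)) :
    barrier n α R T y t = ((n : ℝ) ^ (α - 1)) ^ (1 / α) * (T / (t / T + 1)) ^ (1 / α) *
      (‖y‖ ^ 2 + R ^ 2 * exp (4 * n * t / T)) ^ (-(1 / α)) := by
  rw [barrier, mul_comm (_ + _), ← div_div, div_rpow (div_pos hT ht).le (by positivity),
    rpow_neg (by positivity)]
  ring

theorem coeff_mul_barrier_rpow_neg (hn : 0 < n) (hα : α ≠ 0) (hR : R ≠ 0) (hT : 0 < T)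
    (ht : 0 < t / T + 1) (y : EuclideanSpace ℝ (Fin n)) :
    (n : ℝ) ^ (α - 1) * barrier n α R T y t ^ (-α) =
      (‖y‖ ^ 2 + R ^ 2 * exp (4 * n * t / T)) * (t / T + 1) / T := by
  rw [barrier, mul_rpow_one_div_mul_rpow_neg (rpow_pos_of_pos (Nat.cast_pos.2 hn) _)
    (by positivity) hα, inv_div]

theorem sum_pd_barrier_flux (hn : 0 < n) (hα : α ≠ 0) (hR : R ≠ 0) (hT : 0 < T)
    (ht : 0 < t / T + 1) (x : EuclideanSpace ℝ (Fin n)) :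
    ∑ i, pd i (fun y => (n : ℝ) ^ (α - 1) * barrier n α R T y t ^ (-α) *
        pd i (fun z => barrier n α R T z t) y) x =
      -(2 / α) * ((t / T + 1) / T) *
        ((n * (R ^ 2 * exp (4 * n * t / T)) + (n - 2 / α) * ‖x‖ ^ 2) /
          (‖x‖ ^ 2 + R ^ 2 * exp (4 * n * t / T))) * barrier n α R T x t := by
  set a := R ^ 2 * exp (4 * n * t / T) with ha_def
  have hG (y : EuclideanSpace ℝ (Fin n)) : 0 < ‖y‖ ^ 2 + a := by positivity
  set K := ((n : ℝ) ^ (α - 1)) ^ (1 / α) * (T / (t / T + 1)) ^ (1 / α)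
  have hrad (y : EuclideanSpace ℝ (Fin n)) :
      barrier n α R T y t = K * (‖y‖ ^ 2 + a) ^ (-(1 / α)) :=
    barrier_eq_radial hT ht y
  have hderiv (d : ℝ) (y : EuclideanSpace ℝ (Fin n)) :
      HasDerivAt (fun s => d * (s + a) ^ (-(1 / α)))
        (d * (-(1 / α) * (‖y‖ ^ 2 + a) ^ (-(1 / α) - 1))) (‖y‖ ^ 2) :=
    ((((hasDerivAt_id' _).add_const a).rpow_const (Or.inl (hG y).ne')).const_mul d).congr_deriv
      (by ring)
  set c := -(2 / α * K * (t / T + 1) / T)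
  have hflux (i : Fin n) :
      (fun y => (n : ℝ) ^ (α - 1) * barrier n α R T y t ^ (-α) *
        pd i (fun z => barrier n α R T z t) y) =
      fun y => c * (‖y‖ ^ 2 + a) ^ (-(1 / α)) * y i := by
    funext y
    rw [coeff_mul_barrier_rpow_neg hn hα hR hT ht, ← ha_def, funext hrad,
      pd_comp_norm_sq (f := fun s => K * (s + a) ^ (-(1 / α))) (hderiv K y),
      rpow_sub_one (hG y).ne']
    have := (hG y).ne'
    simp only [c]
    field_simp
  simp only [hflux]
  rw [sum_pd_comp_norm_sq_mul_apply (f := fun s => c * (s + a) ^ (-(1 / α))) (hderiv c x), hrad,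
    rpow_sub_one (hG x).ne']
  have := (hG x).ne'
  simp only [c]
  field_simp
  ring

theorem hasDerivAt_barrier (hR : R ≠ 0) (hT : 0 < T) (ht : 0 < t / T + 1)
    (x : EuclideanSpace ℝ (Fin n)) :
    HasDerivAt (barrier n α R T x) (-(1 / α) * barrier n α R T x t *
      (4 * n * (R ^ 2 * exp (4 * n * t / T)) / (T * (‖x‖ ^ 2 + R ^ 2 * exp (4 * n * t / T))) +
        1 / (T * (t / T + 1)))) t := by
  have hG : HasDerivAt (fun s => ‖x‖ ^ 2 + R ^ 2 * exp (4 * n * s / T))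
      (R ^ 2 * (exp (4 * n * t / T) * (4 * n / T))) t := by
    refine ((((hasDerivAt_id' t).const_mul (4 * n : ℝ)).div_const T).exp.const_mul _
      |>.const_add _).congr_deriv ?_
    ring
  have hH : HasDerivAt (fun s => s / T + 1) (1 / T) t :=
    ((hasDerivAt_id t).div_const T).add_const 1
  refine ((hG.div_mul_rpow_const hH hT.ne' (by positivity) ht.ne').const_mul
    (((n : ℝ) ^ (α - 1)) ^ (1 / α))).congr_deriv ?_
  rw [barrier]
  field_simp

theorem deriv_barrier_sub_sum_pd_flux (hn : 0 < n) (hα : α = 2 / n) (hR : R ≠ 0) (hT : 0 < T)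
    (ht : 0 < t / T + 1) (x : EuclideanSpace ℝ (Fin n)) :
    deriv (barrier n α R T x) t -
        ∑ i, pd i (fun y => (n : ℝ) ^ (α - 1) * barrier n α R T y t ^ (-α) *
          pd i (fun z => barrier n α R T z t) y) x =
      -(2 * n * ((T - t) / T) * (R ^ 2 * exp (4 * n * t / T)) /
          (‖x‖ ^ 2 + R ^ 2 * exp (4 * n * t / T)) + 1 / (t / T + 1)) *
        (barrier n α R T x t / (α * T)) := by
  have hα0 : α ≠ 0 := by rw [hα]; positivity
  have hcrit : (n : ℝ) - 2 / α = 0 := by rw [hα]; field_simp; ring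
  rw [(hasDerivAt_barrier hR hT ht x).deriv, sum_pd_barrier_flux hn hα0 hR hT ht x, hcrit]
  field_simp
  ring

end Barrier

/-- Barrier identity in the critical case `α = 2/n`, `n ≥ 2`, for
`Ψ(x,t) = (n^{α−1})^{1/α} (T/((|x|²+R²e^{4nt/T})(t/T+1)))^{1/α}`:
on `0 < t < T` the quantity `∂_tΨ − ∑_i ∂_{x_i}(n^{α−1}Ψ^{−α}∂_{x_i}Ψ)` equals
the displayed expression and is `< −Ψ/(2αT) < 0`. -/
theorem critical_barrier_subsolution (n : ℕ) (hn : 2 ≤ n) (α R T : ℝ)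
    (hα : α = 2 / (n : ℝ)) (hR : 0 < R) (hT : 0 < T)
    (Ψ : EuclideanSpace ℝ (Fin n) → ℝ → ℝ)
    (hΨ : ∀ x s, Ψ x s = ((n : ℝ) ^ (α - 1)) ^ (1 / α) *
      (T / ((‖x‖ ^ 2 + R ^ 2 * Real.exp (4 * n * s / T)) * (s / T + 1))) ^ (1 / α)) :
    ∀ (x : EuclideanSpace ℝ (Fin n)) (t : ℝ), 0 < t → t < T →
      (deriv (Ψ x) t -
          ∑ i, pd i (fun y =>
            (n : ℝ) ^ (α - 1) * (Ψ y t) ^ (-α) * pd i (fun z => Ψ z t) y) x =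
        -(2 * n * ((T - t) / T) *
            (R ^ 2 * Real.exp (4 * n * t / T)) /
              (‖x‖ ^ 2 + R ^ 2 * Real.exp (4 * n * t / T)) +
          1 / (t / T + 1)) * (Ψ x t / (α * T))) ∧
      (deriv (Ψ x) t -
          ∑ i, pd i (fun y =>
            (n : ℝ) ^ (α - 1) * (Ψ y t) ^ (-α) * pd i (fun z => Ψ z t) y) x <
        -(Ψ x t / (2 * α * T))) ∧
      (-(Ψ x t / (2 * α * T)) < 0) := by
  intro x t ht htT
  obtain rfl : Ψ = barrier n α R T := funext fun x => funext (hΨ x)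
  have hH : 0 < t / T + 1 := by positivity
  have hidentity := deriv_barrier_sub_sum_pd_flux (by omega) hα hR.ne' hT hH x
  have hαpos : 0 < α := by rw [hα]; positivity
  have hΨx : 0 < barrier n α R T x t := by unfold barrier; positivity
  refine ⟨hidentity, ?_, ?_⟩
  · rw [hidentity]
    have hA : 0 ≤ 2 * n * ((T - t) / T) * (R ^ 2 * exp (4 * n * t / T)) /
        (‖x‖ ^ 2 + R ^ 2 * exp (4 * n * t / T)) := by
      have : 0 ≤ (T - t) / T := div_nonneg (sub_nonneg.2 htT.le) hT.le
      positivity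
    have hB : 1 / 2 < 1 / (t / T + 1) :=
      one_div_lt_one_div_of_lt hH (by linarith [(div_lt_one hT).2 htT])
    have hQ : 0 < barrier n α R T x t / (α * T) := by positivity
    have : barrier n α R T x t / (2 * α * T) = barrier n α R T x t / (α * T) / 2 := by ring
    nlinarith [mul_lt_mul_of_pos_right hB hQ, mul_nonneg hA hQ.le]
  · have : 0 < barrier n α R T x t / (2 * α * T) := by positivity
    linarith
end

section
/- Let n ≥ 2, α ∈ (0, 1], T > 0, and let ĉ, c̄ be constants with 0 < ĉ < 1 and c̄ > ĉ. Then there exists R₀ > 0 depending only on α, n, T (and ĉ, c̄) such that for every R > R₀, the function Ψ̄(x,t) = R² (4π(T−t))^{−(n/2)c̄} e^{ĉ n |x|²/(4(T−t))} is a supersolution of the fast diffusion equation on ℝⁿ × [0, T): for all x ∈ ℝⁿ and 0 ≤ t < T, ∂_t Ψ̄ − Σ_i ∂_{x_i}( n^{α−1} Ψ̄^{−α} ∂_{x_i} Ψ̄ ) ≥ 0. -/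
/-!
At a fixed time write `Ψ̄ = A e^{B|x|²}` with `A = R²(4π(T−t))^{−nc̄/2}` and `B = ĉn/(4(T−t))`.
Then `∂_tΨ̄ = A e^{B|x|²} (nc̄/2 + B|x|²)/(T−t)`, while the flux `n^{α−1}Ψ̄^{−α}∇Ψ̄` equals
`n^{α−1}A^{1−α}·2B·x e^{(1−α)B|x|²}`, whose divergence is
`n^{α−1}A^{1−α}·2B e^{(1−α)B|x|²}(n + 2(1−α)B|x|²) ≤ n^{α−1}A^{1−α}·2B e^{B|x|²}(n + 2B|x|²)`.
Because `ĉ ≤ 1` and `ĉ ≤ c̄`, `2B(n + 2B|x|²) ≤ n(nc̄/2 + B|x|²)/(T−t)`, so the divergence is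
dominated by the time derivative as soon as `n^α A^{1−α} ≤ A`, i.e. `n ≤ A`; and `A ≥ n` on
`[0, T)` once `R² > n(4πT)^{nc̄/2}`.
-/

open Real

theorem mul_exp_rpow_neg_mul_self {A : ℝ} (hA : 0 < A) (α u : ℝ) :
    (A * exp u) ^ (-α) * (A * exp u) = A ^ (1 - α) * exp ((1 - α) * u) := by
  rw [← rpow_add_one (by positivity), mul_rpow hA.le (exp_pos u).le, ← exp_mul,
    neg_add_eq_sub, mul_comm u]

section Gaussian

variable {n : ℕ} (i : Fin n) (x : EuclideanSpace ℝ (Fin n))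

theorem hasFDerivAt_exp_mul_norm_sq (B : ℝ) :
    HasFDerivAt (fun z : EuclideanSpace ℝ (Fin n) => exp (B * ‖z‖ ^ 2))
      (exp (B * ‖x‖ ^ 2) • B • 2 • innerSL ℝ x) x :=
  ((hasStrictFDerivAt_norm_sq x).hasFDerivAt.const_mul B).exp

theorem pd_const_mul_exp_mul_norm_sq (C B : ℝ) :
    pd i (fun z => C * exp (B * ‖z‖ ^ 2)) x = C * exp (B * ‖x‖ ^ 2) * (2 * B * x i) := by
  rw [pd, ((hasFDerivAt_exp_mul_norm_sq x B).const_mul C).fderiv]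
  simp [EuclideanSpace.inner_single_right]
  ring

theorem pd_const_mul_coord_mul_exp_mul_norm_sq (D B : ℝ) :
    pd i (fun z => D * (z i * exp (B * ‖z‖ ^ 2))) x
      = D * exp (B * ‖x‖ ^ 2) * (1 + 2 * B * x i ^ 2) := by
  have hcoord : HasFDerivAt (fun z : EuclideanSpace ℝ (Fin n) => z i)
      (EuclideanSpace.proj i : EuclideanSpace ℝ (Fin n) →L[ℝ] ℝ) x :=
    (EuclideanSpace.proj i : EuclideanSpace ℝ (Fin n) →L[ℝ] ℝ).hasFDerivAt
  have h : HasFDerivAt (fun z : EuclideanSpace ℝ (Fin n) => D * (z i * exp (B * ‖z‖ ^ 2))) _ x :=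
    (hcoord.mul (hasFDerivAt_exp_mul_norm_sq x B)).const_mul D
  rw [pd, h.fderiv]
  simp [EuclideanSpace.inner_single_right]
  ring

theorem sum_pd_const_mul_coord_mul_exp_mul_norm_sq (D B : ℝ) :
    ∑ i, pd i (fun z => D * (z i * exp (B * ‖z‖ ^ 2))) x
      = D * exp (B * ‖x‖ ^ 2) * (n + 2 * B * ‖x‖ ^ 2) := by
  simp only [pd_const_mul_coord_mul_exp_mul_norm_sq, mul_add, mul_one, Finset.sum_add_distrib,
    ← Finset.mul_sum, EuclideanSpace.real_norm_sq_eq x]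
  simp
  ring

theorem sum_pd_fde_flux_gaussian {A : ℝ} (hA : 0 < A) (c α B : ℝ) :
    ∑ i, pd i (fun y => c * (A * exp (B * ‖y‖ ^ 2)) ^ (-α)
        * pd i (fun z => A * exp (B * ‖z‖ ^ 2)) y) x
      = c * A ^ (1 - α) * (2 * B) * exp ((1 - α) * B * ‖x‖ ^ 2)
        * (n + 2 * ((1 - α) * B) * ‖x‖ ^ 2) := by
  have hflux : ∀ i : Fin n, (fun y => c * (A * exp (B * ‖y‖ ^ 2)) ^ (-α)
        * pd i (fun z => A * exp (B * ‖z‖ ^ 2)) y)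
      = fun y => c * A ^ (1 - α) * (2 * B) * (y i * exp ((1 - α) * B * ‖y‖ ^ 2)) := by
    intro i; funext y
    rw [pd_const_mul_exp_mul_norm_sq, mul_assoc (1 - α)]
    linear_combination (c * (2 * B * y i)) * mul_exp_rpow_neg_mul_self hA α (B * ‖y‖ ^ 2)
  simp only [hflux, sum_pd_const_mul_coord_mul_exp_mul_norm_sq]

end Gaussian

theorem hasDerivAt_rpow_mul_exp_div {K a b c e T t : ℝ} (ha : a ≠ 0) (hc : c ≠ 0) (ht : t ≠ T) :
    HasDerivAt (fun s => K * (a * (T - s)) ^ e * exp (b / (c * (T - s))))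
      (K * (a * (T - t)) ^ e * exp (b / (c * (T - t))) * ((b / (c * (T - t)) - e) / (T - t)))
      t := by
  have hτ : T - t ≠ 0 := sub_ne_zero.2 ht.symm
  have hlin : HasDerivAt (fun s => T - s) (-1) t := by
    simpa using (hasDerivAt_id t).const_sub T
  have hpow := ((hlin.const_mul a).rpow_const (p := e) (Or.inl (mul_ne_zero ha hτ))).const_mul K
  have hexp : HasDerivAt (fun s => exp (b / (c * (T - s))))
      (exp (b / (c * (T - t))) * ((0 * (c * (T - t)) - b * (c * -1)) / (c * (T - t)) ^ 2)) t :=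
    ((hasDerivAt_const t b).div (hlin.const_mul c) (mul_ne_zero hc hτ)).exp
  refine (hpow.mul hexp).congr_deriv ?_
  rw [rpow_sub_one (mul_ne_zero ha hτ)]
  field_simp
  ring

theorem exp_mul_mul_add_le_of_le {n u v s : ℝ} (hs : 0 ≤ s) (hu : 0 ≤ n + 2 * u * s)
    (huv : u ≤ v) : exp (u * s) * (n + 2 * u * s) ≤ exp (v * s) * (n + 2 * v * s) := by
  have hus : u * s ≤ v * s := mul_le_mul_of_nonneg_right huv hs
  exact mul_le_mul (exp_le_exp.2 hus) (by linarith) hu (exp_pos _).le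

theorem rpow_sub_one_mul_rpow_one_sub_mul_self_le {n A α : ℝ} (hn : 0 ≤ n) (hnA : n ≤ A)
    (hα : 0 < α) : n ^ (α - 1) * A ^ (1 - α) * n ≤ A := by
  have hA : 0 ≤ A := hn.trans hnA
  calc n ^ (α - 1) * A ^ (1 - α) * n = n ^ α * A ^ (1 - α) := by
        rw [mul_right_comm, ← rpow_add_one' hn (by simpa using hα.ne')]
        ring_nf
    _ ≤ A ^ α * A ^ (1 - α) := by gcongr
    _ = A := by rw [← rpow_add' hA (by simp)]; simp

theorem two_mul_mul_add_le {n ch cb τ s : ℝ} (h0 : 0 ≤ ch) (h1 : ch ≤ 1)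
    (h2 : ch ≤ cb) (hτ : 0 < τ) (hs : 0 ≤ s) :
    2 * (ch * n / (4 * τ)) * (n + 2 * (ch * n / (4 * τ)) * s)
      ≤ n * ((n / 2 * cb + ch * n / (4 * τ) * s) / τ) := by
  rw [← sub_nonneg]
  have key : n * ((n / 2 * cb + ch * n / (4 * τ) * s) / τ)
      - 2 * (ch * n / (4 * τ)) * (n + 2 * (ch * n / (4 * τ)) * s)
      = (n ^ 2 * (cb - ch) / (2 * τ)) + ch * (1 - ch) * n ^ 2 * s / (4 * τ ^ 2) := by
    field_simp
    ring
  rw [key]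
  have : 0 ≤ cb - ch := sub_nonneg.2 h2
  have : 0 ≤ 1 - ch := sub_nonneg.2 h1
  positivity

theorem le_sq_mul_rpow_neg_of_sqrt_lt {N R a b p : ℝ} (ha : 0 < a) (hab : a ≤ b) (hp : 0 ≤ p)
    (hR : √(N * b ^ p) < R) : N ≤ R ^ 2 * a ^ (-p) := by
  have hb : 0 < b := ha.trans_le hab
  have hNR : N * b ^ p < R ^ 2 := (sqrt_lt' ((sqrt_nonneg _).trans_lt hR)).1 hR
  calc N = N * b ^ p * b ^ (-p) := by
        rw [mul_assoc, ← rpow_add hb, add_neg_cancel, rpow_zero, mul_one]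
    _ ≤ R ^ 2 * b ^ (-p) := by gcongr
    _ ≤ R ^ 2 * a ^ (-p) :=
        mul_le_mul_of_nonneg_left (rpow_le_rpow_of_nonpos ha hab (neg_nonpos.2 hp)) (sq_nonneg R)

theorem gaussian_diffusion_term_le {n A α B s Q : ℝ} (hn : 0 ≤ n) (hnA : n ≤ A) (hα0 : 0 < α)
    (hα1 : α ≤ 1) (hB : 0 ≤ B) (hs : 0 ≤ s) (hQ : 0 ≤ Q) (hBQ : 2 * B * (n + 2 * B * s) ≤ n * Q) :
    n ^ (α - 1) * A ^ (1 - α) * (2 * B) * exp ((1 - α) * B * s) * (n + 2 * ((1 - α) * B) * s)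
      ≤ A * exp (B * s) * Q := by
  have hA : 0 ≤ A := hn.trans hnA
  have hB1 : 0 ≤ (1 - α) * B := mul_nonneg (sub_nonneg.2 hα1) hB
  have hexp := exp_mul_mul_add_le_of_le (n := n) hs (by positivity)
    (show (1 - α) * B ≤ B by nlinarith)
  calc n ^ (α - 1) * A ^ (1 - α) * (2 * B) * exp ((1 - α) * B * s) * (n + 2 * ((1 - α) * B) * s)
      = n ^ (α - 1) * A ^ (1 - α) * (2 * B)
          * (exp ((1 - α) * B * s) * (n + 2 * ((1 - α) * B) * s)) := by ring
    _ ≤ n ^ (α - 1) * A ^ (1 - α) * (2 * B) * (exp (B * s) * (n + 2 * B * s)) := by gcongr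
    _ = n ^ (α - 1) * A ^ (1 - α) * exp (B * s) * (2 * B * (n + 2 * B * s)) := by ring
    _ ≤ n ^ (α - 1) * A ^ (1 - α) * exp (B * s) * (n * Q) := by gcongr
    _ = n ^ (α - 1) * A ^ (1 - α) * n * (exp (B * s) * Q) := by ring
    _ ≤ A * (exp (B * s) * Q) := by
        gcongr; exact rpow_sub_one_mul_rpow_one_sub_mul_self_le hn hnA hα0
    _ = A * exp (B * s) * Q := by ring

theorem gaussian_fde_supersolution_general (n : ℕ) (α T ch cb : ℝ)
    (hα : 0 < α ∧ α ≤ 1) (h0 : 0 < ch) (h1 : ch < 1)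
    (h2 : ch < cb) :
    ∃ R₀ > (0 : ℝ), ∀ R : ℝ, R₀ < R →
      ∀ Ψ : EuclideanSpace ℝ (Fin n) → ℝ → ℝ,
      (∀ x s, Ψ x s = R ^ 2 * (4 * Real.pi * (T - s)) ^ (-((n : ℝ) / 2) * cb) *
        Real.exp ((ch * n * ‖x‖ ^ 2) / (4 * (T - s)))) →
      ∀ (x : EuclideanSpace ℝ (Fin n)) (t : ℝ), 0 ≤ t → t < T →
        0 ≤ deriv (Ψ x) t -
          ∑ i, pd i (fun y =>
            (n : ℝ) ^ (α - 1) * (Ψ y t) ^ (-α) * pd i (fun z => Ψ z t) y) x := by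
  refine ⟨√(n * (4 * π * T) ^ ((n : ℝ) / 2 * cb)) + 1, by positivity,
    fun R hR Ψ hΨ x t ht0 htT => ?_⟩
  have hτ : 0 < T - t := sub_pos.2 htT
  set A := R ^ 2 * (4 * π * (T - t)) ^ (-((n : ℝ) / 2) * cb)
  set B := ch * n / (4 * (T - t))
  have hcb : 0 < cb := h0.trans h2
  have hnA : (n : ℝ) ≤ A := by
    have := le_sq_mul_rpow_neg_of_sqrt_lt (a := 4 * π * (T - t)) (b := 4 * π * T)
      (by positivity) (by gcongr; linarith) (by positivity) ((lt_add_one _).trans hR)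
    rwa [← neg_mul] at this
  have hA : 0 < A := by
    have : 0 < R := (by positivity : (0 : ℝ) ≤ _).trans_lt hR
    positivity
  have hBs : ∀ z : EuclideanSpace ℝ (Fin n), B * ‖z‖ ^ 2 = ch * n * ‖z‖ ^ 2 / (4 * (T - t)) :=
    fun z => div_mul_eq_mul_div ..
  have hdt : deriv (Ψ x) t = A * exp (B * ‖x‖ ^ 2) * ((n / 2 * cb + B * ‖x‖ ^ 2) / (T - t)) := by
    rw [funext (hΨ x), (hasDerivAt_rpow_mul_exp_div (by positivity) four_ne_zero htT.ne).deriv,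
      hBs]
    ring
  have hΨt : ∀ z, Ψ z t = A * exp (B * ‖z‖ ^ 2) := fun z => by rw [hΨ, hBs]
  simp only [hdt, hΨt, sum_pd_fde_flux_gaussian x hA]
  exact sub_nonneg.2 (gaussian_diffusion_term_le (Nat.cast_nonneg n) hnA hα.1 hα.2 (by positivity)
    (sq_nonneg ‖x‖) (by positivity) (two_mul_mul_add_le h0.le h1.le h2.le hτ (sq_nonneg ‖x‖)))

/-- For `n ≥ 2`, `α ∈ (0,1]`, `T > 0`, `0 < ĉ < 1 < ∞`, `c̄ > ĉ`: there is
`R₀ > 0` (depending only on `α, n, T, ĉ, c̄`) such that for every `R > R₀`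
the growing Gaussian `Ψ̄(x,t) = R²(4π(T−t))^{−(n/2)c̄} e^{ĉn|x|²/(4(T−t))}` is
a supersolution of the fast diffusion equation on `ℝⁿ × [0,T)`:
`∂_tΨ̄ − ∑_i ∂_{x_i}(n^{α−1}Ψ̄^{−α}∂_{x_i}Ψ̄) ≥ 0`. -/
theorem gaussian_fde_supersolution (n : ℕ) (hn : 2 ≤ n) (α T ch cb : ℝ)
    (hα : 0 < α ∧ α ≤ 1) (hT : 0 < T) (h0 : 0 < ch) (h1 : ch < 1)
    (h2 : ch < cb) :
    ∃ R₀ > (0 : ℝ), ∀ R : ℝ, R₀ < R →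
      ∀ Ψ : EuclideanSpace ℝ (Fin n) → ℝ → ℝ,
      (∀ x s, Ψ x s = R ^ 2 * (4 * Real.pi * (T - s)) ^ (-((n : ℝ) / 2) * cb) *
        Real.exp ((ch * n * ‖x‖ ^ 2) / (4 * (T - s)))) →
      ∀ (x : EuclideanSpace ℝ (Fin n)) (t : ℝ), 0 ≤ t → t < T →
        0 ≤ deriv (Ψ x) t -
          ∑ i, pd i (fun y =>
            (n : ℝ) ^ (α - 1) * (Ψ y t) ^ (-α) * pd i (fun z => Ψ z t) y) x :=
  gaussian_fde_supersolution_general n α T ch cb hα h0 h1 h2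
end
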